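/- arXiv:2412.15640 — 8 statements merged into one kernel-verified Lean document; each statement's English description precedes it below -/
import Mathlib

section
/- Let X be a real Banach space, let A ⊆ X be a nonempty, closed, convex and bounded set, let f : X → ℝ ∪ {+∞} be lower semicontinuous, let a ∈ dom f, and let r ∈ ℝ satisfy r ≤ inf_{x∈A} f(x). Then there exists a point x̄ in the multidirectional interval [a,A] such that f(x̄) ≤ max{f(a), r} and f⁻(x̄; A − a) ≥ r − f(a). -/
open Filter Set

/-- The multidirectional interval `[a, A] = {a + t • (x - a) : t ∈ [0,1], x ∈ A}`. -/
def mdInterval {X : Type*} [AddCommGroup X] [Module ℝ X] (a : X) (A : Set X) : Set X :=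
  {y | ∃ t ∈ Set.Icc (0 : ℝ) 1, ∃ x ∈ A, y = a + t • (x - a)}

/-- The `A`-directional derivative
`f⁻(x; A) = liminf_{t ↓ 0} (inf f(x + t A) - f x) / t`, with values in `EReal`. -/
noncomputable def mdDeriv {Y : Type*} [NormedAddCommGroup Y] [NormedSpace ℝ Y]
    (f : Y → EReal) (x : Y) (A : Set Y) : EReal :=
  Filter.liminf
    (fun t : ℝ => ((t⁻¹ : ℝ) : EReal) * (sInf (f '' ((fun v => x + t • v) '' A)) - f x))
    (nhdsWithin 0 (Set.Ioi 0))

/-!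
Put `c = r - f a` and say that `(t, x) ∈ ℝ × X` descends to `(t', x')` when `t ≤ t'`,
`x' - x ∈ (t' - t) • (A - a)` and `f x' ≤ f x + c (t' - t)`. Convexity of `A` makes this relation
transitive. Closedness and boundedness of `A` and lower semicontinuity of `f` make its upper sets
closed, and along a chain the space coordinate is Lipschitz in time, so by completeness of `X`
every chain has an upper bound and Zorn's lemma gives maximal elements with time `≤ 1`.

Call `(t, x)` unimprovable if every `(t', x')` it descends to with `t' ≤ 1` satisfies
`f x' ≥ f x + c (t' - t)`; stepping by `s • (w - a)` with `w ∈ A` shows that then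
`f⁻(x; A - a) ≥ c`. Either `(0, a)` is unimprovable, or it descends to a point strictly below the
line `f a + c t`; then so does a maximal element above it, which is unimprovable and has `t < 1`
because `f ≥ r = f a + c` on `A`. Finally `f x ≤ f a + c t ≤ max (f a) r`.
-/

open scoped Pointwise Topology

theorem isClosed_setOf_le_add_coe {Y : Type*} [TopologicalSpace Y] {f : Y → EReal}
    (hf : LowerSemicontinuous f) (e : EReal) {g : Y → ℝ} (hg : Continuous g) :
    IsClosed {y | f y ≤ e + g y} := by
  have hcont : Continuous fun y => e + (g y : EReal) :=
    continuous_iff_continuousAt.2 fun y =>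
      (EReal.continuousAt_add (Or.inr (EReal.coe_ne_bot _)) (Or.inr (EReal.coe_ne_top _))).comp
        (continuous_const.prodMk (continuous_coe_real_ereal.comp hg)).continuousAt
  exact hf.isClosed_epigraph.preimage (continuous_id.prodMk hcont)

section

variable {E : Type*} [NormedAddCommGroup E] [NormedSpace ℝ E] {B : Set E} {f : E → EReal}
  {c : ℝ}

theorem isClosed_setOf_nonneg_and_mem_smul (hBc : IsClosed B) (hBb : Bornology.IsBounded B) :
    IsClosed {x : ℝ × E | 0 ≤ x.1 ∧ x.2 ∈ x.1 • B} := by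
  refine IsSeqClosed.isClosed fun u x hu hlim => ?_
  have ht : Tendsto (fun n => (u n).1) atTop (𝓝 x.1) := (continuous_fst.tendsto _).comp hlim
  have hv : Tendsto (fun n => (u n).2) atTop (𝓝 x.2) := (continuous_snd.tendsto _).comp hlim
  have hx : 0 ≤ x.1 := ge_of_tendsto' ht fun n => (hu n).1
  refine ⟨hx, ?_⟩
  rcases hx.eq_or_lt with hx | hx
  · obtain ⟨R, -, hR⟩ := hBb.exists_pos_norm_le
    have hnorm : ∀ n, ‖(u n).2‖ ≤ (u n).1 * R := fun n => by
      obtain ⟨b, hb, hbu⟩ := (hu n).2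
      rw [← hbu, norm_smul, Real.norm_of_nonneg (hu n).1]
      exact mul_le_mul_of_nonneg_left (hR b hb) (hu n).1
    have hx2 : ‖x.2‖ ≤ x.1 * R := le_of_tendsto_of_tendsto' hv.norm (ht.mul_const R) hnorm
    obtain ⟨b, hb, -⟩ := (hu 0).2
    rw [← hx, zero_mul, norm_le_zero_iff] at hx2
    rw [hx2, ← hx]
    exact ⟨b, hb, zero_smul ℝ b⟩
  · have hev : ∀ᶠ n in atTop, (u n).1⁻¹ • (u n).2 ∈ B :=
      (ht.eventually (eventually_gt_nhds hx)).mono fun n hn =>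
        (mem_smul_set_iff_inv_smul_mem₀ hn.ne' _ _).1 (hu n).2
    exact (mem_smul_set_iff_inv_smul_mem₀ hx.ne' _ _).2
      (hBc.mem_of_tendsto ((ht.inv₀ hx.ne').smul hv) hev)

structure Descends (B : Set E) (f : E → EReal) (c : ℝ) (p q : ℝ × E) : Prop where
  fst_le : p.1 ≤ q.1
  sub_mem : q.2 - p.2 ∈ (q.1 - p.1) • B
  le_add : f q.2 ≤ f p.2 + ↑(c * (q.1 - p.1))

namespace Descends

variable {p q s : ℝ × E}

theorem refl (hB : B.Nonempty) (p : ℝ × E) : Descends B f c p p where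
  fst_le := le_rfl
  sub_mem := by
    rw [sub_self, sub_self, zero_smul_set hB]
    exact rfl
  le_add := by simp

theorem trans (hB : Convex ℝ B) (hpq : Descends B f c p q) (hqs : Descends B f c q s) :
    Descends B f c p s where
  fst_le := hpq.fst_le.trans hqs.fst_le
  sub_mem := by
    have hsplit : s.1 - p.1 = (q.1 - p.1) + (s.1 - q.1) := by ring
    rw [hsplit, hB.add_smul (sub_nonneg.2 hpq.fst_le) (sub_nonneg.2 hqs.fst_le),
      ← sub_add_sub_cancel' q.2 p.2 s.2]
    exact add_mem_add hpq.sub_mem hqs.sub_mem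
  le_add := calc
    f s.2 ≤ f q.2 + ↑(c * (s.1 - q.1)) := hqs.le_add
    _ ≤ f p.2 + ↑(c * (q.1 - p.1)) + ↑(c * (s.1 - q.1)) := add_le_add_left hpq.le_add _
    _ = f p.2 + ↑(c * (s.1 - p.1)) := by
      rw [add_assoc, ← EReal.coe_add, ← mul_add, sub_add_sub_cancel']

theorem norm_sub_le {D : ℝ} (hD : ∀ b ∈ B, ‖b‖ ≤ D) (h : Descends B f c p q) :
    ‖q.2 - p.2‖ ≤ (q.1 - p.1) * D := by
  obtain ⟨b, hb, hbq⟩ := h.sub_mem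
  rw [← hbq, norm_smul, Real.norm_of_nonneg (sub_nonneg.2 h.fst_le)]
  exact mul_le_mul_of_nonneg_left (hD b hb) (sub_nonneg.2 h.fst_le)

theorem eq_of_fst_le (h : Descends B f c p q) (hqp : q.1 ≤ p.1) : q = p := by
  have hfst : q.1 = p.1 := le_antisymm hqp h.fst_le
  have hsub := h.sub_mem
  rw [hfst, sub_self] at hsub
  exact Prod.ext hfst (sub_eq_zero.1 (zero_smul_set_subset B hsub))

end Descends

theorem isClosed_setOf_descends (hBc : IsClosed B) (hBb : Bornology.IsBounded B)
    (hf : LowerSemicontinuous f) (p : ℝ × E) : IsClosed {q | Descends B f c p q} := by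
  have hcone : IsClosed {q : ℝ × E | 0 ≤ q.1 - p.1 ∧ q.2 - p.2 ∈ (q.1 - p.1) • B} :=
    (isClosed_setOf_nonneg_and_mem_smul hBc hBb).preimage
      ((continuous_fst.sub continuous_const).prodMk (continuous_snd.sub continuous_const))
  have hle : IsClosed {q : ℝ × E | f q.2 ≤ f p.2 + ↑(c * (q.1 - p.1))} :=
    isClosed_setOf_le_add_coe (hf.comp continuous_snd) (f p.2) (by fun_prop)
  convert hcone.inter hle using 1
  ext q
  exact ⟨fun h => ⟨⟨sub_nonneg.2 h.fst_le, h.sub_mem⟩, h.le_add⟩,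
    fun ⟨⟨h₁, h₂⟩, h₃⟩ => ⟨sub_nonneg.1 h₁, h₂, h₃⟩⟩

variable {C : Set (ℝ × E)} {p q : ℝ × E}

theorem IsChain.descends_of_fst_lt (hC : IsChain (Descends B f c) C) (hp : p ∈ C) (hq : q ∈ C)
    (hlt : p.1 < q.1) : Descends B f c p q := by
  rcases eq_or_ne p q with rfl | hne
  · exact absurd hlt (lt_irrefl _)
  exact (hC hp hq hne).resolve_right fun h => hlt.not_ge h.fst_le

theorem IsChain.norm_sub_le_of_descends {D : ℝ} (hD : ∀ b ∈ B, ‖b‖ ≤ D)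
    (hC : IsChain (Descends B f c) C) (hp : p ∈ C) (hq : q ∈ C) :
    ‖p.2 - q.2‖ ≤ |p.1 - q.1| * D := by
  rcases eq_or_ne p q with rfl | hne
  · simp
  rcases hC hp hq hne with h | h
  · rw [norm_sub_rev, abs_sub_comm, abs_of_nonneg (sub_nonneg.2 h.fst_le)]
    exact h.norm_sub_le hD
  · rw [abs_of_nonneg (sub_nonneg.2 h.fst_le)]
    exact h.norm_sub_le hD

theorem le_add_of_forall_descends {m : ℝ × E} {T : ℝ}
    (h : ∀ q, Descends B f c m q → q.1 ≤ T → f m.2 + ↑(c * (q.1 - m.1)) ≤ f q.2) :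
    ∀ s ∈ Ioc 0 (T - m.1), ∀ v ∈ B, f m.2 + ↑(c * s) ≤ f (m.2 + s • v) := by
  intro s hs v hv
  by_contra! hlt
  have hq : Descends B f c m (m.1 + s, m.2 + s • v) :=
    ⟨by simp [hs.1.le], by simpa using smul_mem_smul_set hv, by simpa using hlt.le⟩
  exact (h _ hq (by simp; linarith [hs.2])).not_gt (by simpa using hlt)

variable [CompleteSpace E]

theorem IsChain.exists_descends_ub (hBne : B.Nonempty) (hBc : IsClosed B)
    (hBb : Bornology.IsBounded B) (hf : LowerSemicontinuous f) (hC : IsChain (Descends B f c) C)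
    (hne : C.Nonempty) {T : ℝ} (hCT : ∀ q ∈ C, q.1 ≤ T) :
    ∃ ub : ℝ × E, ub.1 ≤ T ∧ ∀ q ∈ C, Descends B f c q ub := by
  obtain ⟨D, hD0, hD⟩ := hBb.exists_pos_norm_le
  have hbdd : BddAbove (Prod.fst '' C) := ⟨T, forall_mem_image.2 hCT⟩
  obtain ⟨t, ht_mono, ht_lim, ht_mem⟩ := exists_seq_tendsto_sSup (hne.image Prod.fst) hbdd
  set τ := sSup (Prod.fst '' C)
  choose u huC hut using ht_mem
  have ht_le : ∀ n, t n ≤ τ := fun n => le_csSup hbdd ⟨u n, huC n, hut n⟩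
  have hdist : ∀ m n, ‖(u m).2 - (u n).2‖ ≤ |t m - t n| * D := fun m n => by
    simpa only [hut] using hC.norm_sub_le_of_descends hD (huC m) (huC n)
  have hcauchy : CauchySeq fun n => (u n).2 := by
    refine cauchySeq_of_le_tendsto_0 (fun N => (τ - t N) * D) (fun m n N hm hn => ?_) ?_
    · rw [dist_eq_norm]
      refine (hdist m n).trans (mul_le_mul_of_nonneg_right ?_ hD0.le)
      rw [abs_le]
      constructor <;> linarith [ht_mono hm, ht_mono hn, ht_le m, ht_le n]
    · simpa using (ht_lim.const_sub τ).mul_const D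
  obtain ⟨y, hy⟩ := cauchySeq_tendsto_of_complete hcauchy
  have hu_lim : Tendsto u atTop (𝓝 (τ, y)) := by
    simpa only [← hut] using ht_lim.prodMk_nhds hy
  refine ⟨(τ, y), csSup_le (hne.image _) (forall_mem_image.2 hCT), fun q hq => ?_⟩
  rcases (le_csSup hbdd (mem_image_of_mem _ hq)).lt_or_eq with hlt | heq
  · refine (isClosed_setOf_descends hBc hBb hf q).mem_of_tendsto hu_lim ?_
    filter_upwards [ht_lim.eventually (eventually_gt_nhds hlt)] with n hn
    exact hC.descends_of_fst_lt hq (huC n) (by rwa [hut])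
  · have hq_lim : ‖y - q.2‖ ≤ |τ - q.1| * D :=
      le_of_tendsto_of_tendsto' (hy.sub_const q.2).norm
        (((ht_lim.sub_const q.1).abs).mul_const D) fun n => by
          simpa only [hut] using hC.norm_sub_le_of_descends hD (huC n) hq
    rw [heq, sub_self, abs_zero, zero_mul, norm_le_zero_iff, sub_eq_zero] at hq_lim
    rw [show (τ, y) = q from Prod.ext heq.symm hq_lim]
    exact Descends.refl hBne q

theorem exists_maximal_descends (hBne : B.Nonempty) (hBc : IsClosed B) (hBconv : Convex ℝ B)
    (hBb : Bornology.IsBounded B) (hf : LowerSemicontinuous f) {T : ℝ} (hpT : p.1 ≤ T) :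
    ∃ m, Descends B f c p m ∧ m.1 ≤ T ∧ ∀ q, Descends B f c m q → q.1 ≤ T → q = m := by
  have hchain_bdd : ∀ Ch : Set {q : ℝ × E // Descends B f c p q ∧ q.1 ≤ T},
      IsChain (fun x y => Descends B f c x.1 y.1) Ch →
      ∃ ub : {q : ℝ × E // Descends B f c p q ∧ q.1 ≤ T}, ∀ x ∈ Ch, Descends B f c x.1 ub.1 := by
    intro Ch hCh
    rcases Ch.eq_empty_or_nonempty with rfl | ⟨x, hx⟩
    · exact ⟨⟨p, Descends.refl hBne p, hpT⟩, by simp⟩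
    obtain ⟨ub, hubT, hub⟩ :=
      (hCh.image_of_map_rel _ _ Subtype.val fun _ _ h => h).exists_descends_ub hBne hBc hBb hf
        ⟨x.1, mem_image_of_mem _ hx⟩ (forall_mem_image.2 fun q _ => q.2.2)
    exact ⟨⟨ub, x.2.1.trans hBconv (hub x.1 (mem_image_of_mem _ hx)), hubT⟩,
      fun q hq => hub q.1 (mem_image_of_mem _ hq)⟩
  obtain ⟨m, hm⟩ := exists_maximal_of_chains_bounded hchain_bdd fun hxy hyz => hxy.trans hBconv hyz
  exact ⟨m.1, m.2.1, m.2.2, fun q hmq hqT =>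
    hmq.eq_of_fst_le (hm ⟨q, m.2.1.trans hBconv hmq, hqT⟩ hmq).fst_le⟩

theorem exists_descends_forall_le_add (hBne : B.Nonempty) (hBc : IsClosed B)
    (hBconv : Convex ℝ B) (hBb : Bornology.IsBounded B) (hf : LowerSemicontinuous f) (x₀ : E)
    (hx₀ : ∀ v ∈ B, f x₀ + c ≤ f (x₀ + v)) :
    ∃ m, Descends B f c (0, x₀) m ∧ m.1 < 1 ∧
      ∀ s ∈ Ioc 0 (1 - m.1), ∀ v ∈ B, f m.2 + ↑(c * s) ≤ f (m.2 + s • v) := by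
  by_cases hdrop : ∃ p, Descends B f c (0, x₀) p ∧ p.1 ≤ 1 ∧ f p.2 < f x₀ + ↑(c * p.1)
  · obtain ⟨p, hp, hp1, hlt⟩ := hdrop
    obtain ⟨m, hpm, hm1, hmax⟩ := exists_maximal_descends (c := c) hBne hBc hBconv hBb hf hp1
    have hm : Descends B f c (0, x₀) m := hp.trans hBconv hpm
    have hmlt : f m.2 < f x₀ + ↑(c * m.1) := calc
      f m.2 ≤ f p.2 + ↑(c * (m.1 - p.1)) := hpm.le_add
      _ < f x₀ + ↑(c * p.1) + ↑(c * (m.1 - p.1)) := EReal.add_lt_add_right_coe hlt _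
      _ = f x₀ + ↑(c * m.1) := by rw [add_assoc, ← EReal.coe_add, ← mul_add, add_sub_cancel]
    refine ⟨m, hm, hm1.lt_of_ne fun h1 => ?_, le_add_of_forall_descends fun q hmq hq1 => ?_⟩
    · have hmB := hm.sub_mem
      rw [h1, sub_zero, one_smul] at hmB
      have := hx₀ _ hmB
      rw [add_sub_cancel, ← mul_one c, ← h1] at this
      exact (this.trans_lt hmlt).false
    · rw [hmax q hmq hq1]
      simp
  · push Not at hdrop
    exact ⟨(0, x₀), Descends.refl hBne _, one_pos,
      le_add_of_forall_descends fun q hq hq1 => by simpa using hdrop q hq hq1⟩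

end

theorem coe_le_mdDeriv {E : Type*} [NormedAddCommGroup E] [NormedSpace ℝ E] {f : E → EReal}
    {x : E} {A : Set E} {c : ℝ} (hx : f x ≠ ⊤) (hx' : f x ≠ ⊥)
    (h : ∀ᶠ s in 𝓝[>] 0, ∀ v ∈ A, f x + ↑(c * s) ≤ f (x + s • v)) : ↑c ≤ mdDeriv f x A := by
  refine le_liminf_of_le (by isBoundedDefault) ?_
  filter_upwards [h, self_mem_nhdsWithin] with s hs (hs0 : 0 < s)
  have hinf : ↑(c * s) ≤ sInf (f '' ((fun v => x + s • v) '' A)) - f x := by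
    rw [EReal.le_sub_iff_add_le (Or.inl hx') (Or.inl hx), add_comm]
    exact le_sInf (by rintro _ ⟨_, ⟨v, hv, rfl⟩, rfl⟩; exact hs v hv)
  calc (c : EReal) = ↑s⁻¹ * ↑(c * s) := by
        rw [← EReal.coe_mul, mul_left_comm, inv_mul_cancel₀ hs0.ne', mul_one]
    _ ≤ _ := mul_le_mul_of_nonneg_left hinf (EReal.coe_nonneg.2 (inv_nonneg.2 hs0.le))

theorem primal_clarke_ledyaev
    {X : Type*} [NormedAddCommGroup X] [NormedSpace ℝ X] [CompleteSpace X]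
    (A : Set X) (hA : A.Nonempty) (hAcl : IsClosed A) (hAconv : Convex ℝ A)
    (hAbd : Bornology.IsBounded A)
    (f : X → EReal) (hf : LowerSemicontinuous f) (hfbot : ∀ x, f x ≠ ⊥)
    (a : X) (ha : f a ≠ ⊤)
    (r : ℝ) (hr : ∀ x ∈ A, (r : EReal) ≤ f x) :
    ∃ xbar ∈ mdInterval a A,
      f xbar ≤ max (f a) (r : EReal) ∧
      (r : EReal) - f a ≤ mdDeriv f xbar ((fun x => x - a) '' A) := by
  obtain ⟨α, hα⟩ : ∃ α : ℝ, f a = α := ⟨_, (EReal.coe_toReal ha (hfbot a)).symm⟩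
  set B := (fun x => x - a) '' A
  have hB : B = A - {a} := sub_singleton.symm
  have hfB : ∀ v ∈ B, f a + ↑(r - α) ≤ f (a + v) := by
    rintro _ ⟨x, hx, rfl⟩
    rw [hα, ← EReal.coe_add, add_sub_cancel, add_sub_cancel]
    exact hr x hx
  obtain ⟨m, hm, hm1, hmin⟩ := exists_descends_forall_le_add (B := B) (hA.image _)
    ((Homeomorph.subRight a).isClosedMap A hAcl) (hB ▸ hAconv.sub (convex_singleton a))
    (hB ▸ hAbd.sub Bornology.isBounded_singleton) hf a hfB
  obtain ⟨_, ⟨w, hw, rfl⟩, hmw⟩ := hm.sub_mem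
  have hfm : f m.2 ≤ ↑(α + (r - α) * m.1) := by simpa [hα] using hm.le_add
  have hconv : α + (r - α) * m.1 ≤ max α r := by
    rcases le_total α r with h | h <;> nlinarith [hm.fst_le, le_max_left α r, le_max_right α r]
  have hmA : m.2 ∈ mdInterval a A :=
    ⟨m.1, ⟨hm.fst_le, hm1.le⟩, w, hw, by simpa [sub_eq_iff_eq_add'] using hmw.symm⟩
  refine ⟨m.2, hmA, ?_, ?_⟩
  · rw [hα, ← EReal.coe_strictMono.monotone.map_max]
    exact hfm.trans (EReal.coe_le_coe_iff.2 hconv)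
  · rw [hα, ← EReal.coe_sub]
    exact coe_le_mdDeriv (ne_top_of_le_ne_top (EReal.coe_ne_top _) hfm) (hfbot _)
      (eventually_of_mem (Ioc_mem_nhdsGT (sub_pos.2 hm1)) hmin)
end

section
/- Let X be a real Banach space, let A ⊆ X be a nonempty, closed, convex and bounded set, and let f : X → ℝ ∪ {+∞} be a proper lower semicontinuous function. If a ∈ dom f satisfies f(a) ≤ inf_{x∈A} f(x), then there exists x̄ in the multidirectional interval [a,A] such that f(x̄) ≤ f(a) and f⁻(x̄; A − a) ≥ 0. -/
open Filter Set

/-!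
Call `(s, x) ≺ (s', x')` when `s < s' ≤ 1`, `x' - x ∈ (s' - s) • (A - a)` and `f x' < f x`:
`s` is the part of the budget `[0, 1]` spent moving from `a` along directions of `A - a`, and by
convexity of `A` this is a strict order. Along a chain, `x` is a Lipschitz function of `s`, so a
chain without greatest element converges in the complete space `X` to a pair which, by closedness
of `A` and lower semicontinuity of `f`, lies strictly above the whole chain. Zorn's lemma then gives
a maximal pair `(s, x̄)` above `(0, a)`: `x̄ ∈ [a, A]` and `f x̄ ≤ f a`; `s < 1`, because `s = 1`
would put `x̄` in `A` with `f x̄ < f a`; and maximality says `f (x̄ + t d) ≥ f x̄` for all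
`d ∈ A - a` and `0 < t < 1 - s`, so that `f⁻(x̄; A - a) ≥ 0`.
-/

open Topology Relation Pointwise

theorem exists_reflGen_forall_not_rel_of_chains_bounded {α : Type*} {r : α → α → Prop}
    [IsStrictOrder α r] (x₀ : α)
    (h : ∀ c, IsChain (ReflGen r) c → c.Nonempty → ∃ ub, ∀ p ∈ c, ReflGen r p ub) :
    ∃ m, ReflGen r x₀ m ∧ ∀ q, ¬ r m q := by
  have : Nonempty {p // ReflGen r x₀ p} := ⟨⟨x₀, .refl⟩⟩
  obtain ⟨⟨m, hm⟩, hmax⟩ := exists_maximal_of_nonempty_chains_bounded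
    (r := fun p q : {p // ReflGen r x₀ p} => ReflGen r p.1 q.1)
    (fun c hc hne => by
      obtain ⟨p, hp⟩ := hne
      have hc' : IsChain (ReflGen r) (Subtype.val '' c) := by
        rintro _ ⟨s, hs, rfl⟩ _ ⟨t, ht, rfl⟩ hst
        exact hc hs ht (ne_of_apply_ne _ hst)
      obtain ⟨ub, hub⟩ := h _ hc' ⟨p.1, p, hp, rfl⟩
      exact ⟨⟨ub, trans_of _ p.2 (hub _ ⟨p, hp, rfl⟩)⟩,
        fun q hq => hub _ ⟨q, hq, rfl⟩⟩)
    (fun h₁ h₂ => trans_of _ h₁ h₂)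
  refine ⟨m, hm, fun q hmq => ?_⟩
  rcases hmax ⟨q, trans_of _ hm (.single hmq)⟩ (.single hmq) with _ | hqm
  · exact irrefl _ hmq
  · exact irrefl _ (trans_of r hmq hqm)

theorem CauchySeq.of_dist_le_mul {α β : Type*} [PseudoMetricSpace α] [PseudoMetricSpace β]
    {u : ℕ → α} {x : ℕ → β} {K : ℝ} (hK : 0 ≤ K) (hu : CauchySeq u)
    (h : ∀ m n, dist (x m) (x n) ≤ K * dist (u m) (u n)) : CauchySeq x := by
  obtain ⟨b, hb0, hb, hlim⟩ := cauchySeq_iff_le_tendsto_0.1 hu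
  refine cauchySeq_iff_le_tendsto_0.2 ⟨fun N => K * b N, fun N => mul_nonneg hK (hb0 N),
    fun m n N hm hn => (h m n).trans (mul_le_mul_of_nonneg_left (hb m n N hm hn) hK), ?_⟩
  simpa using hlim.const_mul K

theorem IsClosed.mem_smul_set_of_tendsto {𝕜 E ι : Type*} [NormedField 𝕜] [AddCommGroup E]
    [Module 𝕜 E] [TopologicalSpace E] [ContinuousSMul 𝕜 E] {D : Set E} (hD : IsClosed D)
    {l : Filter ι} [l.NeBot] {t : ι → 𝕜} {y : ι → E} {t₀ : 𝕜} {y₀ : E}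
    (ht : Tendsto t l (𝓝 t₀)) (ht₀ : t₀ ≠ 0) (hy : Tendsto y l (𝓝 y₀))
    (h : ∀ᶠ i in l, y i ∈ t i • D) : y₀ ∈ t₀ • D := by
  rw [mem_smul_set_iff_inv_smul_mem₀ ht₀]
  refine hD.mem_of_tendsto ((ht.inv₀ ht₀).smul hy) ?_
  filter_upwards [h, ht.eventually_ne ht₀] with i hi hti
  exact (mem_smul_set_iff_inv_smul_mem₀ hti _ _).1 hi

theorem mdDeriv_nonneg_of_eventually_le {Y : Type*} [NormedAddCommGroup Y] [NormedSpace ℝ Y]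
    {f : Y → EReal} {x : Y} {D : Set Y} (hx_top : f x ≠ ⊤) (hx_bot : f x ≠ ⊥)
    (h : ∀ᶠ t in 𝓝[>] (0 : ℝ), f x ≤ sInf (f '' ((fun v => x + t • v) '' D))) :
    0 ≤ mdDeriv f x D := by
  refine le_liminf_of_le (by isBoundedDefault) ?_
  filter_upwards [h, self_mem_nhdsWithin] with t ht (htpos : 0 < t)
  exact EReal.mul_nonneg (EReal.coe_nonneg.2 (inv_nonneg.2 htpos.le))
    ((EReal.sub_nonneg (Or.inr hx_top) (Or.inr hx_bot)).2 ht)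

section Descent

variable {X : Type*} [AddCommGroup X] [Module ℝ X] {f : X → EReal} {D : Set X}

variable (f D) in
def DescentStep (p q : ℝ × X) : Prop :=
  p.1 < q.1 ∧ q.1 ≤ 1 ∧ q.2 - p.2 ∈ (q.1 - p.1) • D ∧ f q.2 < f p.2

theorem DescentStep.trans (hD : Convex ℝ D) {p q s : ℝ × X} (hpq : DescentStep f D p q)
    (hqs : DescentStep f D q s) : DescentStep f D p s := by
  obtain ⟨hpq₁, -, hpq₂, hpqf⟩ := hpq
  obtain ⟨hqs₁, hs₁, hqs₂, hqsf⟩ := hqs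
  refine ⟨hpq₁.trans hqs₁, hs₁, ?_, hqsf.trans hpqf⟩
  have h₁ : s.1 - p.1 = (q.1 - p.1) + (s.1 - q.1) := by ring
  have h₂ : s.2 - p.2 = (q.2 - p.2) + (s.2 - q.2) := by abel
  rw [h₁, h₂, hD.add_smul (sub_nonneg.2 hpq₁.le) (sub_nonneg.2 hqs₁.le)]
  exact add_mem_add hpq₂ hqs₂

theorem DescentStep.isStrictOrder (hD : Convex ℝ D) :
    IsStrictOrder (ℝ × X) (DescentStep f D) where
  irrefl _ h := lt_irrefl _ h.1
  trans _ _ _ := DescentStep.trans hD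

end Descent

section Chain

variable {X : Type*} [NormedAddCommGroup X] [NormedSpace ℝ X] {f : X → EReal} {D : Set X}
  {c : Set (ℝ × X)} {p q : ℝ × X} {K : ℝ}

theorem DescentStep.reflGen_norm_sub_le (hK : ∀ d ∈ D, ‖d‖ ≤ K)
    (h : ReflGen (DescentStep f D) p q) : ‖q.2 - p.2‖ ≤ (q.1 - p.1) * K := by
  rcases h with _ | ⟨hpq, -, ⟨d, hd, hdq⟩, -⟩
  · simp
  · rw [← hdq, norm_smul, Real.norm_of_nonneg (sub_nonneg.2 hpq.le)]
    exact mul_le_mul_of_nonneg_left (hK d hd) (sub_nonneg.2 hpq.le)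

theorem IsChain.reflGen_descentStep_of_fst_le (hc : IsChain (ReflGen (DescentStep f D)) c)
    (hp : p ∈ c) (hq : q ∈ c) (h : p.1 ≤ q.1) : ReflGen (DescentStep f D) p q := by
  rcases hc.total hp hq with hpq | (_ | hqp)
  · exact hpq
  · exact .refl
  · exact absurd h hqp.1.not_ge

theorem IsChain.descentStep_of_fst_lt (hc : IsChain (ReflGen (DescentStep f D)) c)
    (hp : p ∈ c) (hq : q ∈ c) (h : p.1 < q.1) : DescentStep f D p q := by
  rcases hc.reflGen_descentStep_of_fst_le hp hq h.le with _ | hpq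
  · exact absurd h (lt_irrefl _)
  · exact hpq

theorem IsChain.dist_snd_le (hc : IsChain (ReflGen (DescentStep f D)) c)
    (hK : ∀ d ∈ D, ‖d‖ ≤ K) (hp : p ∈ c) (hq : q ∈ c) :
    dist p.2 q.2 ≤ K * dist p.1 q.1 := by
  wlog h : p.1 ≤ q.1 generalizing p q
  · rw [dist_comm, dist_comm p.1]
    exact this hq hp (le_of_not_ge h)
  rw [dist_eq_norm', dist_comm, Real.dist_eq, abs_of_nonneg (sub_nonneg.2 h), mul_comm]
  exact DescentStep.reflGen_norm_sub_le hK (hc.reflGen_descentStep_of_fst_le hp hq h)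

theorem IsChain.exists_descentStep_ub_of_noMax [CompleteSpace X] (hD : IsClosed D)
    (hDb : Bornology.IsBounded D) (hf : LowerSemicontinuous f)
    (hc : IsChain (ReflGen (DescentStep f D)) c) (hne : c.Nonempty)
    (hstep : ∀ p ∈ c, ∃ q ∈ c, DescentStep f D p q) :
    ∃ ub, ∀ p ∈ c, DescentStep f D p ub := by
  obtain ⟨K, hK0, hK⟩ := hDb.exists_pos_norm_le
  have hle : ∀ p ∈ c, p.1 ≤ 1 := fun p hp =>
    let ⟨_, _, hpq⟩ := hstep p hp
    hpq.1.le.trans hpq.2.1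
  have hbdd : BddAbove (Prod.fst '' c) := ⟨1, forall_mem_image.2 hle⟩
  set b := sSup (Prod.fst '' c)
  have hlt : ∀ p ∈ c, p.1 < b := fun p hp =>
    let ⟨q, hq, hpq⟩ := hstep p hp
    hpq.1.trans_le (le_csSup hbdd (mem_image_of_mem _ hq))
  obtain ⟨u, -, hu, hu_mem⟩ := exists_seq_tendsto_sSup (hne.image Prod.fst) hbdd
  choose P hPc hPu using hu_mem
  have hfst : Tendsto (fun n => (P n).1) atTop (𝓝 b) := by simpa only [hPu] using hu
  have hcauchy : CauchySeq fun n => (P n).2 :=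
    CauchySeq.of_dist_le_mul hK0.le hfst.cauchySeq fun m n => hc.dist_snd_le hK (hPc m) (hPc n)
  obtain ⟨x, hx⟩ := cauchySeq_tendsto_of_complete hcauchy
  refine ⟨(b, x), fun p hp => ?_⟩
  obtain ⟨q, hq, hpq⟩ := hstep p hp
  have hev : ∀ᶠ n in atTop, q.1 < (P n).1 := hfst.eventually_const_lt (hlt q hq)
  refine ⟨hlt p hp, csSup_le (hne.image _) (forall_mem_image.2 hle), ?_, ?_⟩
  · refine hD.mem_smul_set_of_tendsto (hfst.sub_const p.1) (sub_ne_zero.2 (hlt p hp).ne')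
      (hx.sub_const p.2) ?_
    filter_upwards [hev] with n hn
    exact (hc.descentStep_of_fst_lt hp (hPc n) (hpq.1.trans hn)).2.2.1
  · have hxq : f x ≤ f q.2 := by
      refine (hf.isClosed_preimage (f q.2)).mem_of_tendsto hx ?_
      filter_upwards [hev] with n hn
      exact (hc.descentStep_of_fst_lt hq (hPc n) hn).2.2.2.le
    exact hxq.trans_lt hpq.2.2.2

theorem IsChain.exists_reflGen_descentStep_ub [CompleteSpace X] (hD : IsClosed D)
    (hDb : Bornology.IsBounded D) (hf : LowerSemicontinuous f)
    (hc : IsChain (ReflGen (DescentStep f D)) c) (hne : c.Nonempty) :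
    ∃ ub, ∀ p ∈ c, ReflGen (DescentStep f D) p ub := by
  by_cases hmax : ∃ m ∈ c, ∀ p ∈ c, ReflGen (DescentStep f D) p m
  · obtain ⟨m, -, hm⟩ := hmax
    exact ⟨m, hm⟩
  push Not at hmax
  have hstep : ∀ p ∈ c, ∃ q ∈ c, DescentStep f D p q := fun p hp => by
    obtain ⟨q, hq, hqp⟩ := hmax p hp
    rcases hc.total hp hq with (_ | hpq) | hqp'
    · exact absurd .refl hqp
    · exact ⟨q, hq, hpq⟩
    · exact absurd hqp' hqp
  obtain ⟨ub, hub⟩ := hc.exists_descentStep_ub_of_noMax hD hDb hf hne hstep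
  exact ⟨ub, fun p hp => .single (hub p hp)⟩

theorem exists_descentStep_maximal [CompleteSpace X] (hDc : Convex ℝ D) (hD : IsClosed D)
    (hDb : Bornology.IsBounded D) (hf : LowerSemicontinuous f) (x₀ : X) :
    ∃ m : ℝ × X, ReflGen (DescentStep f D) (0, x₀) m ∧ ∀ q, ¬ DescentStep f D m q :=
  haveI := DescentStep.isStrictOrder (f := f) hDc
  exists_reflGen_forall_not_rel_of_chains_bounded _ fun _ hc hne =>
    hc.exists_reflGen_descentStep_ub hD hDb hf hne

theorem mdDeriv_nonneg_of_forall_not_descentStep {b : ℝ} {x : X} (hb : b < 1)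
    (hx_top : f x ≠ ⊤) (hx_bot : f x ≠ ⊥) (hmax : ∀ q, ¬ DescentStep f D (b, x) q) :
    0 ≤ mdDeriv f x D := by
  refine mdDeriv_nonneg_of_eventually_le hx_top hx_bot ?_
  filter_upwards [Ioo_mem_nhdsGT (sub_pos.2 hb)] with t ⟨ht0, ht1⟩
  refine le_sInf ?_
  rintro _ ⟨_, ⟨d, hd, rfl⟩, rfl⟩
  refine not_lt.1 fun hlt => hmax (b + t, x + t • d)
    ⟨lt_add_of_pos_right b ht0, by linarith, by simpa using smul_mem_smul_set hd, hlt⟩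

end Chain

theorem primal_rolle_general
    {X : Type*} [NormedAddCommGroup X] [NormedSpace ℝ X] [CompleteSpace X]
    (A : Set X) (hA : A.Nonempty) (hAcl : IsClosed A) (hAconv : Convex ℝ A)
    (hAbd : Bornology.IsBounded A)
    (f : X → EReal) (hf : LowerSemicontinuous f) (hfbot : ∀ x, f x ≠ ⊥)
    (a : X) (ha : f a ≠ ⊤) (hfa : ∀ x ∈ A, f a ≤ f x) :
    ∃ xbar ∈ mdInterval a A,
      f xbar ≤ f a ∧ 0 ≤ mdDeriv f xbar ((fun x => x - a) '' A) := by
  set D := (fun x => x - a) '' A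
  have hDc : Convex ℝ D := by
    rw [show D = (fun x => -a + x) '' A from image_congr fun x _ => sub_eq_neg_add x a]
    exact hAconv.translate (-a)
  have hD : IsClosed D := (Homeomorph.subRight a).isClosedMap _ hAcl
  have hDb : Bornology.IsBounded D :=
    (IsometryEquiv.subRight a).isometry.lipschitz.isBounded_image hAbd
  obtain ⟨⟨b, x⟩, hreach, hmax⟩ := exists_descentStep_maximal hDc hD hDb hf a
  rcases hreach with _ | ⟨hb0, hb1, ⟨_, ⟨v, hv, rfl⟩, hxv⟩, hfx⟩
  · obtain ⟨v, hv⟩ := hA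
    exact ⟨a, ⟨0, left_mem_Icc.2 zero_le_one, v, hv, by simp⟩, le_rfl,
      mdDeriv_nonneg_of_forall_not_descentStep zero_lt_one ha (hfbot a) hmax⟩
  dsimp only at hb0 hb1 hxv hfx
  rw [sub_zero] at hxv
  have hb : b < 1 := hb1.lt_of_ne fun hb => by
    rw [hb, one_smul, sub_left_inj] at hxv
    exact (hfa v hv).not_gt (hxv ▸ hfx)
  exact ⟨x, ⟨b, ⟨hb0.le, hb1⟩, v, hv, by rw [hxv]; abel⟩, hfx.le,
    mdDeriv_nonneg_of_forall_not_descentStep hb (ne_top_of_lt hfx) (hfbot x) hmax⟩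

theorem primal_rolle
    {X : Type*} [NormedAddCommGroup X] [NormedSpace ℝ X] [CompleteSpace X]
    (A : Set X) (hA : A.Nonempty) (hAcl : IsClosed A) (hAconv : Convex ℝ A)
    (hAbd : Bornology.IsBounded A)
    (f : X → EReal) (hf : LowerSemicontinuous f) (hfbot : ∀ x, f x ≠ ⊥)
    (hproper : ∃ x, f x ≠ ⊤)
    (a : X) (ha : f a ≠ ⊤) (hfa : ∀ x ∈ A, f a ≤ f x) :
    ∃ xbar ∈ mdInterval a A,
      f xbar ≤ f a ∧ 0 ≤ mdDeriv f xbar ((fun x => x - a) '' A) :=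
  primal_rolle_general A hA hAcl hAconv hAbd f hf hfbot a ha hfa
end

section
/- (Bishop–Phelps Lemma.) Let X be a real Banach space and let A ⊆ X be a nonempty, closed, convex and bounded set. Let a ∈ X \ A, and let M ⊆ X be a closed set with a ∈ M such that C(a;A) ∩ M is bounded. Then there exists x̄ ∈ M ∩ C(a;A) such that M ∩ (x̄ + C(0; A − a)) = {x̄}. -/
open Set Filter Metric Topology

/-- The cone generated by `A` with apex `a`: `C(a; A) = {a + t • (x - a) : t ≥ 0, x ∈ A}`. -/
def genCone {X : Type*} [AddCommGroup X] [Module ℝ X] (a : X) (A : Set X) : Set X :=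
  {y | ∃ t : ℝ, 0 ≤ t ∧ ∃ x ∈ A, y = a + t • (x - a)}

lemma brondsted_max {X : Type*} [NormedAddCommGroup X] [NormedSpace ℝ X] [CompleteSpace X]
    (C : Set X) (hC0 : (0:X) ∈ C) (hCadd : ∀ u ∈ C, ∀ v ∈ C, u + v ∈ C) (hCcl : IsClosed C)
    (f : X →L[ℝ] ℝ) (c : ℝ) (hc : 0 < c) (hCf : ∀ v ∈ C, c * ‖v‖ ≤ f v)
    (S : Set X) (hScl : IsClosed S) (x0 : X) (hx0 : x0 ∈ S)
    (R : ℝ) (hR : ∀ x ∈ S, f x ≤ R) :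
    ∃ xbar ∈ S, ∀ y ∈ S, y - xbar ∈ C → y = xbar := by
  -- the sup function
  set T : X → Set ℝ := fun x => f '' {y | y ∈ S ∧ y - x ∈ C} with hT
  have hTmem : ∀ x ∈ S, f x ∈ T x := fun x hx => ⟨x, ⟨hx, by simp [hC0]⟩, rfl⟩
  have hTbdd : ∀ x, BddAbove (T x) := by
    intro x
    exact ⟨R, by rintro r ⟨y, ⟨hyS, -⟩, rfl⟩; exact hR y hyS⟩
  set s : X → ℝ := fun x => sSup (T x) with hs
  have key : ∀ (n : ℕ) (x : X), x ∈ S → ∃ y, y ∈ S ∧ y - x ∈ C ∧ s x ≤ f y + (1/2)^n := by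
    intro n x hx
    have hne : (T x).Nonempty := ⟨f x, hTmem x hx⟩
    have hlt : s x - (1/2)^n < s x := by
      have : (0:ℝ) < (1/2)^n := by positivity
      linarith
    obtain ⟨r, hr, hr2⟩ := exists_lt_of_lt_csSup hne hlt
    obtain ⟨y, ⟨hyS, hyC⟩, rfl⟩ := hr
    exact ⟨y, hyS, hyC, by linarith⟩
  choose g hg1 hg2 hg3 using key
  -- the recursive sequence
  set u : ℕ → {x : X // x ∈ S} := fun n =>
    Nat.rec ⟨x0, hx0⟩ (fun n p => ⟨g n p.1 p.2, hg1 n p.1 p.2⟩) n with hu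
  have hstepC : ∀ n, (u (n+1)).1 - (u n).1 ∈ C := fun n => hg2 n (u n).1 (u n).2
  have hstepf : ∀ n, s (u n).1 ≤ f (u (n+1)).1 + (1/2)^n := fun n => hg3 n (u n).1 (u n).2
  have hchain : ∀ m n, n ≤ m → (u m).1 - (u n).1 ∈ C := by
    intro m n h
    induction m with
    | zero => simpa [Nat.le_zero.1 h, sub_self] using hC0
    | succ m ih =>
      rcases Nat.lt_or_ge n (m+1) with h' | h'
      · have := hCadd _ (hstepC m) _ (ih (Nat.lt_succ_iff.1 h'))
        simpa [sub_add_sub_cancel] using this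
      · have : n = m + 1 := le_antisymm h h'
        simpa [this, sub_self] using hC0
  -- elements above u n have f-value at most s (u n)
  have hle_s : ∀ n, ∀ y ∈ S, y - (u n).1 ∈ C → f y ≤ s (u n).1 :=
    fun n y hy hyC => le_csSup (hTbdd _) ⟨y, ⟨hy, hyC⟩, rfl⟩
  -- key estimate
  have hest : ∀ n, ∀ y ∈ S, y - (u (n+1)).1 ∈ C → c * ‖y - (u (n+1)).1‖ ≤ (1/2)^n := by
    intro n y hy hyC
    have h1 : c * ‖y - (u (n+1)).1‖ ≤ f (y - (u (n+1)).1) := hCf _ hyC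
    have h2 : f (y - (u (n+1)).1) = f y - f (u (n+1)).1 := by simp
    have h3 : f y ≤ s (u n).1 := by
      apply hle_s n y hy
      have := hCadd _ hyC _ (hstepC n)
      simpa [sub_add_sub_cancel] using this
    have h4 := hstepf n
    linarith
  -- Cauchy
  have hcau : CauchySeq (fun n => (u (n+1)).1) := by
    apply cauchySeq_of_le_geometric (1/2) (1/c) (by norm_num)
    intro n
    rw [dist_eq_norm]
    have := hest n (u (n+2)).1 (u (n+2)).2 (hchain (n+2) (n+1) (by omega))
    rw [norm_sub_rev]
    rw [div_mul_eq_mul_div, le_div_iff₀ hc]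
    calc ‖(u (n+1+1)).1 - (u (n+1)).1‖ * c ≤ (1/2)^n := by
          rw [mul_comm]; exact this
      _ ≤ 1 * (1/2)^n := by norm_num
  obtain ⟨xbar, hxbar⟩ := cauchySeq_tendsto_of_complete hcau
  have hxbarS : xbar ∈ S := hScl.mem_of_tendsto hxbar (Eventually.of_forall fun n => (u (n+1)).2)
  have hxbar_above : ∀ n, xbar - (u (n+1)).1 ∈ C := by
    intro n
    apply hCcl.mem_of_tendsto ((hxbar.sub tendsto_const_nhds))
    filter_upwards [eventually_ge_atTop n] with m hm
    exact hchain (m+1) (n+1) (by omega)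
  refine ⟨xbar, hxbarS, ?_⟩
  intro y hy hyC
  have hbound : ∀ n, c * ‖y - (u (n+1)).1‖ ≤ (1/2)^n := by
    intro n
    apply hest n y hy
    have := hCadd _ hyC _ (hxbar_above n)
    simpa [sub_add_sub_cancel] using this
  have h1 : Tendsto (fun n => c * ‖y - (u (n+1)).1‖) atTop (𝓝 (c * ‖y - xbar‖)) :=
    (((tendsto_const_nhds.sub hxbar).norm).const_mul c)
  have h2 : Tendsto (fun n : ℕ => ((1:ℝ)/2)^n) atTop (𝓝 0) :=
    tendsto_pow_atTop_nhds_zero_of_lt_one (by norm_num) (by norm_num)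
  have := le_of_tendsto_of_tendsto' h1 h2 hbound
  have hnorm : ‖y - xbar‖ ≤ 0 := by nlinarith
  have : y - xbar = 0 := by
    simpa using le_antisymm hnorm (norm_nonneg _)
  simpa [sub_eq_zero] using this

theorem bishop_phelps_lemma
    {X : Type*} [NormedAddCommGroup X] [NormedSpace ℝ X] [CompleteSpace X]
    (A : Set X) (hA : A.Nonempty) (hAcl : IsClosed A) (hAconv : Convex ℝ A)
    (hAbd : Bornology.IsBounded A)
    (a : X) (haA : a ∉ A)
    (M : Set X) (hMcl : IsClosed M) (haM : a ∈ M)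
    (hMb : Bornology.IsBounded (genCone a A ∩ M)) :
    ∃ xbar ∈ M ∩ genCone a A,
      M ∩ ((fun v => xbar + v) '' genCone 0 ((fun x => x - a) '' A)) = {xbar} := by
  set C : Set X := genCone 0 ((fun x => x - a) '' A) with hCdef
  have hmemC : ∀ v, v ∈ C ↔ ∃ t : ℝ, 0 ≤ t ∧ ∃ x ∈ A, v = t • (x - a) := by
    intro v
    constructor
    · rintro ⟨t, ht, b, ⟨x, hx, rfl⟩, rfl⟩; exact ⟨t, ht, x, hx, by simp⟩
    · rintro ⟨t, ht, x, hx, rfl⟩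
      exact ⟨t, ht, x - a, ⟨x, hx, rfl⟩, by simp⟩
  obtain ⟨x₀, hx₀⟩ := hA
  have hC0 : (0:X) ∈ C := (hmemC 0).2 ⟨0, le_refl 0, x₀, hx₀, by simp⟩
  have hCadd : ∀ u ∈ C, ∀ v ∈ C, u + v ∈ C := by
    intro u hu v hv
    obtain ⟨t, ht, x, hx, rfl⟩ := (hmemC u).1 hu
    obtain ⟨r, hr, y, hy, rfl⟩ := (hmemC v).1 hv
    rcases eq_or_lt_of_le (add_nonneg ht hr) with h0 | hpos
    · have ht0 : t = 0 := by linarith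
      have hr0 : r = 0 := by linarith
      simp [ht0, hr0, hC0]
    · have hne : t + r ≠ 0 := ne_of_gt hpos
      refine (hmemC _).2 ⟨t + r, le_of_lt hpos,
        (t/(t+r)) • x + (r/(t+r)) • y, ?_, ?_⟩
      · exact hAconv hx hy (by positivity) (by positivity) (by field_simp)
      · match_scalars <;> (field_simp; try ring)
  have hmemK : ∀ y, y ∈ genCone a A ↔ y - a ∈ C := by
    intro y
    rw [hmemC]
    constructor
    · rintro ⟨t, ht, x, hx, rfl⟩; exact ⟨t, ht, x, hx, by abel⟩
    · rintro ⟨t, ht, x, hx, h⟩; exact ⟨t, ht, x, hx, by rw [← h]; abel⟩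
  -- separation
  obtain ⟨f, u, hfa, hfA⟩ := geometric_hahn_banach_point_closed hAconv hAcl haA
  set δ : ℝ := u - f a with hδdef
  have hδ : 0 < δ := sub_pos.mpr hfa
  have hδA : ∀ x ∈ A, δ ≤ f x - f a := fun x hx => sub_le_sub_right (le_of_lt (hfA x hx)) (f a)
  obtain ⟨D', hD'⟩ := hAbd.subset_closedBall a
  set D : ℝ := max D' 1 with hDdef
  have hD1 : (0:ℝ) < D := lt_of_lt_of_le one_pos (le_max_right _ _)
  have hD : ∀ x ∈ A, ‖x - a‖ ≤ D := by
    intro x hx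
    have := hD' hx
    rw [mem_closedBall, dist_eq_norm] at this
    exact le_trans this (le_max_left _ _)
  set c : ℝ := δ / D with hcdef
  have hc : 0 < c := by positivity
  have hcD : c * D = δ := div_mul_cancel₀ δ (ne_of_gt hD1)
  have hCf : ∀ v ∈ C, c * ‖v‖ ≤ f v := by
    intro v hv
    obtain ⟨t, ht, x, hx, rfl⟩ := (hmemC v).1 hv
    rw [norm_smul, map_smul]
    simp only [Real.norm_eq_abs, abs_of_nonneg ht, smul_eq_mul, map_sub]
    have h1 := hD x hx
    have h2 := hδA x hx
    have k1 : c * ‖x - a‖ ≤ δ := by rw [← hcD]; exact mul_le_mul_of_nonneg_left h1 hc.le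
    nlinarith [mul_le_mul_of_nonneg_left k1 ht, mul_le_mul_of_nonneg_left h2 ht]
  -- lower bound on ‖x - a‖
  have hδ₀ : 0 < infDist a A := (hAcl.notMem_iff_infDist_pos ⟨x₀, hx₀⟩).1 haA
  have hlow : ∀ x ∈ A, infDist a A ≤ ‖x - a‖ := by
    intro x hx
    rw [← dist_eq_norm, dist_comm]
    exact infDist_le_dist_of_mem hx
  -- cone is closed
  have hCcl : IsClosed C := by
    apply IsSeqClosed.isClosed
    intro v w hv hw
    choose t ht x hx hvx using fun n => (hmemC (v n)).1 (hv n)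
    obtain ⟨T, hT⟩ := hw.norm.bddAbove_range
    have htmem : ∀ n, t n ∈ Icc (0:ℝ) (T / infDist a A) := by
      intro n
      refine ⟨ht n, ?_⟩
      have h1 := hlow (x n) (hx n)
      have h3 : ‖v n‖ ≤ T := hT ⟨n, rfl⟩
      have h2 : ‖v n‖ = t n * ‖x n - a‖ := by
        rw [hvx n, norm_smul, Real.norm_eq_abs, abs_of_nonneg (ht n)]
      rw [le_div_iff₀ hδ₀]
      nlinarith [ht n]
    obtain ⟨t₀, ht₀mem, φ, hφ, hφt⟩ := isCompact_Icc.tendsto_subseq htmem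
    have hwφ : Tendsto (fun n => v (φ n)) atTop (𝓝 w) := hw.comp hφ.tendsto_atTop
    rcases eq_or_lt_of_le ht₀mem.1 with h0 | hpos
    · have hz : Tendsto (fun n => ‖v (φ n)‖) atTop (𝓝 0) := by
        have hub : ∀ n, ‖v (φ n)‖ ≤ t (φ n) * D := by
          intro n
          rw [hvx (φ n), norm_smul, Real.norm_eq_abs, abs_of_nonneg (ht (φ n))]
          exact mul_le_mul_of_nonneg_left (hD _ (hx (φ n))) (ht (φ n))
        have hlim : Tendsto (fun n => t (φ n) * D) atTop (𝓝 0) := by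
          have := hφt.mul_const D
          rwa [← h0, zero_mul] at this
        exact squeeze_zero (fun n => norm_nonneg _) hub hlim
      have : ‖w‖ = 0 := tendsto_nhds_unique hwφ.norm hz
      rw [norm_eq_zero] at this
      rw [this]; exact hC0
    · have hev : ∀ᶠ n in atTop, 0 < t (φ n) := hφt.eventually (eventually_gt_nhds hpos)
      have hx_tend : Tendsto (fun n => x (φ n) - a) atTop (𝓝 (t₀⁻¹ • w)) := by
        have h1 : Tendsto (fun n => (t (φ n))⁻¹ • v (φ n)) atTop (𝓝 (t₀⁻¹ • w)) :=
          (hφt.inv₀ (ne_of_gt hpos)).smul hwφ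
        apply h1.congr'
        filter_upwards [hev] with n hn
        rw [hvx (φ n), smul_smul, inv_mul_cancel₀ (ne_of_gt hn), one_smul]
      have hBcl : IsClosed {z : X | a + z ∈ A} :=
        hAcl.preimage (continuous_const.add continuous_id)
      have hmem : t₀⁻¹ • w ∈ {z : X | a + z ∈ A} := by
        apply hBcl.mem_of_tendsto hx_tend
        filter_upwards with n
        simpa using hx (φ n)
      refine (hmemC w).2 ⟨t₀, le_of_lt hpos, a + t₀⁻¹ • w, hmem, ?_⟩
      rw [add_sub_cancel_left, smul_smul, mul_inv_cancel₀ (ne_of_gt hpos), one_smul]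
  -- the set S
  set S : Set X := genCone a A ∩ M with hSdef
  have hKeq : genCone a A = (fun y => y - a) ⁻¹' C := by
    ext y; exact hmemK y
  have hScl : IsClosed S :=
    (hKeq ▸ hCcl.preimage (continuous_id.sub continuous_const)).inter hMcl
  have haK : a ∈ genCone a A := ⟨0, le_refl 0, x₀, hx₀, by simp⟩
  have haS : a ∈ S := ⟨haK, haM⟩
  have hup : ∀ x ∈ S, ∀ y ∈ M, y - x ∈ C → y ∈ S := by
    intro x hxS y hyM hyC
    refine ⟨(hmemK y).2 ?_, hyM⟩
    have := hCadd _ hyC _ ((hmemK x).1 hxS.1)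
    simpa [sub_add_sub_cancel] using this
  obtain ⟨r, hr⟩ := hMb.subset_closedBall 0
  have hR : ∀ z ∈ S, f z ≤ ‖f‖ * r := by
    intro z hz
    have h1 : ‖z‖ ≤ r := by
      have := hr hz
      rwa [mem_closedBall, dist_zero_right] at this
    calc f z ≤ ‖f z‖ := le_abs_self _
      _ ≤ ‖f‖ * ‖z‖ := f.le_opNorm z
      _ ≤ ‖f‖ * r := by nlinarith [norm_nonneg f, norm_nonneg (f z)]
  obtain ⟨xbar, hxbarS, hmax⟩ :=
    brondsted_max C hC0 hCadd hCcl f c hc hCf S hScl a haS (‖f‖ * r) hR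
  refine ⟨xbar, ⟨hxbarS.2, hxbarS.1⟩, ?_⟩
  ext y
  simp only [mem_inter_iff, mem_image, mem_singleton_iff]
  constructor
  · rintro ⟨hyM, v, hvC, rfl⟩
    have hmem : xbar + v ∈ S := hup xbar hxbarS _ hyM (by simpa using hvC)
    exact hmax _ hmem (by simpa using hvC)
  · rintro rfl
    exact ⟨hxbarS.2, 0, hC0, by simp⟩
end

section
/- Let X be a real Banach space, let A ⊆ X be a nonempty, closed, convex and bounded set, let f : X → ℝ ∪ {+∞}, and let x ∈ dom f be such that f⁻(x;A) > 0. Then there exist constants k > 0 and ε̄ > 0 such that f(y) − f(x) ≥ k‖y − x‖ for every y ∈ (x + C(0;A)) ∩ B(x; ε̄), where B(x; ε̄) is the closed ball of radius ε̄ around x. -/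
open Filter Set

theorem growth_of_positive_mdDeriv
    {X : Type*} [NormedAddCommGroup X] [NormedSpace ℝ X] [CompleteSpace X]
    (A : Set X) (hA : A.Nonempty) (hAcl : IsClosed A) (hAconv : Convex ℝ A)
    (hAbd : Bornology.IsBounded A)
    (f : X → EReal) (hfbot : ∀ x, f x ≠ ⊥)
    (x : X) (hx : f x ≠ ⊤) (hpos : 0 < mdDeriv f x A) :
    ∃ k > (0 : ℝ), ∃ ε > (0 : ℝ),
      ∀ y ∈ ((fun v => x + v) '' genCone 0 A) ∩ Metric.closedBall x ε,
        ((k * ‖y - x‖ : ℝ) : EReal) ≤ f y - f x := by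
  -- f x is a finite real r
  obtain ⟨r, hr⟩ : ∃ r : ℝ, f x = (r : EReal) := by
    lift f x to ℝ using ⟨hx, hfbot x⟩ with r
    exact ⟨r, rfl⟩
  -- pick real c with 0 < c < mdDeriv
  obtain ⟨c, hc0, hclt⟩ := EReal.exists_between_coe_real hpos
  have hc0' : (0:ℝ) < c := by exact_mod_cast hc0
  -- eventually the quotient exceeds c
  have hev : ∀ᶠ t in nhdsWithin (0:ℝ) (Set.Ioi 0),
      (c : EReal) < ((t⁻¹ : ℝ) : EReal) * (sInf (f '' ((fun v => x + t • v) '' A)) - f x) :=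
    eventually_lt_of_lt_liminf hclt
  obtain ⟨δ, hδmem, hδ⟩ := mem_nhdsGT_iff_exists_Ioo_subset.1 hev
  have hδ0 : (0:ℝ) < δ := hδmem
  -- pointwise lower bound
  have key : ∀ t ∈ Set.Ioo (0:ℝ) δ, ∀ v ∈ A, ((r + c * t : ℝ) : EReal) ≤ f (x + t • v) := by
    intro t ht v hv
    have hS : sInf (f '' ((fun v => x + t • v) '' A)) ≤ f (x + t • v) :=
      sInf_le ⟨x + t • v, ⟨v, hv, rfl⟩, rfl⟩
    have hct := hδ ht
    simp only [Set.mem_setOf_eq] at hct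
    rw [hr] at hct
    refine le_trans ?_ hS
    set S := sInf (f '' ((fun v => x + t • v) '' A)) with hSdef
    rcases eq_top_or_lt_top S with hStop | hSlt
    · simp [hStop]
    rcases eq_bot_or_bot_lt S with hSbot | hSbot
    · rw [hSbot] at hct
      have : ((t⁻¹ : ℝ) : EReal) * (⊥ - (r:EReal)) = ⊥ := by
        rw [EReal.bot_sub, EReal.coe_mul_bot_of_pos (inv_pos.2 ht.1)]
      rw [this] at hct
      exact absurd hct (by simp)
    obtain ⟨s, hs⟩ : ∃ s : ℝ, S = (s : EReal) := by
      lift S to ℝ using ⟨hSlt.ne, hSbot.ne'⟩ with s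
      exact ⟨s, rfl⟩
    rw [hs] at hct ⊢
    rw [← EReal.coe_sub, ← EReal.coe_mul, EReal.coe_lt_coe_iff] at hct
    have : r + c * t ≤ s := by
      have ht0 := ht.1
      have h := mul_lt_mul_of_pos_left hct ht0
      rw [← mul_assoc, mul_inv_cancel₀ (ne_of_gt ht0), one_mul, mul_comm] at h
      linarith
    exact_mod_cast this
  -- 0 ∉ A
  have h0A : (0:X) ∉ A := by
    intro h0
    have := key (δ/2) ⟨by positivity, by linarith⟩ 0 h0
    rw [smul_zero, add_zero, hr, EReal.coe_le_coe_iff] at this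
    nlinarith
  -- lower bound on norms in A
  have hm : 0 < Metric.infDist (0:X) A := (hAcl.notMem_iff_infDist_pos hA).1 h0A
  set m := Metric.infDist (0:X) A with hmdef
  have hmle : ∀ a ∈ A, m ≤ ‖a‖ := by
    intro a ha
    have := Metric.infDist_le_dist_of_mem (x := (0:X)) ha
    rwa [dist_zero_left] at this
  -- upper bound on norms in A
  obtain ⟨M, hM⟩ := hAbd.exists_norm_le
  have hM0 : 0 < M := lt_of_lt_of_le hm ((hmle _ hA.choose_spec).trans (hM _ hA.choose_spec))
  refine ⟨c / M, by positivity, δ * m / 2, by positivity, ?_⟩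
  rintro y ⟨⟨w, ⟨t, ht0, a, ha, hw⟩, hyw⟩, hyb⟩
  have hyx : y - x = t • a := by
    rw [← hyw, hw]; simp
  rcases eq_or_lt_of_le ht0 with hteq | htpos
  · -- t = 0, y = x
    have : y = x := by
      rw [← hyw, hw, ← hteq]; simp
    subst this
    simp [hr, ← EReal.coe_sub]
  · -- t > 0
    have ha0 : 0 < ‖a‖ := lt_of_lt_of_le hm (hmle a ha)
    have hnorm : ‖y - x‖ = t * ‖a‖ := by
      rw [hyx, norm_smul, Real.norm_eq_abs, abs_of_pos htpos]
    have hyball : ‖y - x‖ ≤ δ * m / 2 := by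
      rw [← dist_eq_norm]; exact Metric.mem_closedBall.1 hyb
    have htlt : t < δ := by
      have h1 : t * m ≤ t * ‖a‖ := by nlinarith [hmle a ha]
      nlinarith [hnorm ▸ hyball]
    have hfy := key t ⟨htpos, htlt⟩ a ha
    have hfy' : ((r + c * t : ℝ) : EReal) ≤ f y := by
      rwa [show x + t • a = y by rw [← hyw, hw]; simp] at hfy
    have hkey : (c / M) * ‖y - x‖ ≤ c * t := by
      rw [hnorm]
      calc (c/M) * (t*‖a‖) ≤ (c/M) * (t*M) := by
            exact mul_le_mul_of_nonneg_left
              (mul_le_mul_of_nonneg_left (hM a ha) htpos.le) (by positivity)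
        _ = c * t := by field_simp
    rw [hr]
    rcases eq_top_or_lt_top (f y) with hfytop | hfylt
    · rw [hfytop, EReal.top_sub_coe]; exact le_top
    obtain ⟨s, hs⟩ : ∃ s : ℝ, f y = (s : EReal) := by
      lift f y to ℝ using ⟨hfylt.ne, hfbot y⟩ with s
      exact ⟨s, rfl⟩
    rw [hs] at hfy' ⊢
    rw [← EReal.coe_sub, EReal.coe_le_coe_iff]
    have : r + c * t ≤ s := by exact_mod_cast hfy'
    linarith
end

section
/- Let X be a real Banach space and let A ⊆ X be a nonempty, closed, bounded and convex set with 0 ∉ A. Then there exists c > 0 such that for every finite collection of points x₁, …, xₙ ∈ C(0;A) one has ‖x₁ + ⋯ + xₙ‖ ≥ c · (‖x₁‖ + ⋯ + ‖xₙ‖). -/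
open Set

theorem cone_sum_norm_estimate
    {X : Type*} [NormedAddCommGroup X] [NormedSpace ℝ X] [CompleteSpace X]
    (A : Set X) (hA : A.Nonempty) (hAcl : IsClosed A) (hAbd : Bornology.IsBounded A)
    (hAconv : Convex ℝ A) (h0 : (0 : X) ∉ A) :
    ∃ c > (0 : ℝ), ∀ (n : ℕ) (x : Fin n → X), (∀ i, x i ∈ genCone 0 A) →
      c * ∑ i, ‖x i‖ ≤ ‖∑ i, x i‖ := by
  obtain ⟨f, u, hfu, hu⟩ := geometric_hahn_banach_point_closed hAconv hAcl h0
  have hu0 : 0 < u := by simpa using hfu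
  obtain ⟨M, hM⟩ := hAbd.exists_norm_le
  obtain ⟨a0, ha0⟩ := hA
  have hM0 : 0 < M := lt_of_lt_of_le (norm_pos_iff.2 fun h => h0 (h ▸ ha0)) (hM a0 ha0)
  have hf0 : 0 < ‖f‖ := by
    rw [norm_pos_iff]
    intro h
    have := hu a0 ha0
    rw [h] at this
    simp at this
    linarith
  refine ⟨u / (M * ‖f‖), by positivity, fun n x hx => ?_⟩
  -- key pointwise bound: (u/M) * ‖x i‖ ≤ f (x i)
  have key : ∀ i, u / M * ‖x i‖ ≤ f (x i) := by
    intro i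
    obtain ⟨t, ht, a, haA, hxe⟩ := hx i
    simp only [zero_add, sub_zero] at hxe
    have h1 : ‖x i‖ ≤ t * M := by
      rw [hxe, norm_smul, Real.norm_of_nonneg ht]
      exact mul_le_mul_of_nonneg_left (hM a haA) ht
    have h2 : t * u ≤ f (x i) := by
      rw [hxe, map_smul]
      exact mul_le_mul_of_nonneg_left (le_of_lt (hu a haA)) ht
    calc u / M * ‖x i‖ ≤ u / M * (t * M) := by
          exact mul_le_mul_of_nonneg_left h1 (by positivity)
      _ = t * u := by field_simp
      _ ≤ f (x i) := h2
  have hsum : u / M * ∑ i, ‖x i‖ ≤ f (∑ i, x i) := by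
    rw [map_sum, Finset.mul_sum]
    exact Finset.sum_le_sum fun i _ => key i
  have hle : f (∑ i, x i) ≤ ‖f‖ * ‖∑ i, x i‖ :=
    le_trans (le_abs_self _) (f.le_opNorm _)
  have hnn : 0 ≤ ∑ i, ‖x i‖ := Finset.sum_nonneg fun i _ => norm_nonneg _
  rw [div_mul_eq_mul_div, div_le_iff₀ (by positivity)]
  calc u * ∑ i, ‖x i‖ = M * (u / M * ∑ i, ‖x i‖) := by field_simp
    _ ≤ M * (‖f‖ * ‖∑ i, x i‖) := by
        exact mul_le_mul_of_nonneg_left (hsum.trans hle) hM0.le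
    _ = ‖∑ i, x i‖ * (M * ‖f‖) := by ring
end

section
/- Let X be a real Banach space and let B ⊆ X be a nonempty, closed, bounded and convex set. Let V ⊆ [0,B] be a closed set with 0 ∈ V. If V ∩ B = ∅, then there exists x₀ ∈ V such that for every y ∈ (x₀ + C(0;B)) with y ≠ x₀ one has y ∉ V. -/
open Set Filter Topology

theorem loev_type_lemma
    {X : Type*} [NormedAddCommGroup X] [NormedSpace ℝ X] [CompleteSpace X]
    (B : Set X) (hB : B.Nonempty) (hBcl : IsClosed B) (hBbd : Bornology.IsBounded B)
    (hBconv : Convex ℝ B)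
    (V : Set X) (hVsub : V ⊆ mdInterval 0 B) (hVcl : IsClosed V) (h0V : (0 : X) ∈ V)
    (hVB : V ∩ B = ∅) :
    ∃ x₀ ∈ V, ∀ y ∈ (fun v => x₀ + v) '' genCone 0 B, y ≠ x₀ → y ∉ V := by
  classical
  obtain ⟨b₀, hb₀⟩ := hB
  -- `0 ∉ B`
  have h0B : (0 : X) ∉ B := by
    intro h
    have : (0 : X) ∈ V ∩ B := ⟨h0V, h⟩
    simp [hVB] at this
  -- separating functional
  obtain ⟨f, u, hfu, hfB⟩ := geometric_hahn_banach_point_closed hBconv hBcl h0B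
  have hu : 0 < u := by simpa using hfu
  obtain ⟨M, hM⟩ := hBbd.exists_norm_le
  have hM0 : 0 ≤ M := le_trans (norm_nonneg _) (hM _ hb₀)
  -- normalized membership in the cone
  have hcone_mem : ∀ v : X, v ∈ genCone (0 : X) B ↔ ∃ t : ℝ, 0 ≤ t ∧ ∃ b ∈ B, v = t • b := by
    intro v; simp [genCone]
  have h0cone : (0 : X) ∈ genCone (0 : X) B :=
    (hcone_mem 0).2 ⟨0, le_refl 0, b₀, hb₀, by simp⟩
  -- the cone is closed under addition
  have hadd : ∀ v ∈ genCone (0 : X) B, ∀ w ∈ genCone (0 : X) B,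
      v + w ∈ genCone (0 : X) B := by
    intro v hv w hw
    obtain ⟨t, ht, b, hb, rfl⟩ := (hcone_mem v).1 hv
    obtain ⟨s, hs, b', hb', rfl⟩ := (hcone_mem w).1 hw
    rcases eq_or_lt_of_le (add_nonneg ht hs) with h | h
    · have ht0 : t = 0 := by linarith
      have hs0 : s = 0 := by linarith
      exact (hcone_mem _).2 ⟨0, le_refl 0, b₀, hb₀, by simp [ht0, hs0]⟩
    · have hts : t + s ≠ 0 := ne_of_gt h
      refine (hcone_mem _).2 ⟨t + s, le_of_lt h,
        (t / (t + s)) • b + (s / (t + s)) • b', hBconv hb hb'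
          (div_nonneg ht (le_of_lt h)) (div_nonneg hs (le_of_lt h)) (by field_simp), ?_⟩
      rw [smul_add, smul_smul, smul_smul, mul_div_cancel₀ _ hts, mul_div_cancel₀ _ hts]
  set C : Set X := closure (genCone (0 : X) B) with hC
  have hCcl : IsClosed C := isClosed_closure
  have h0C : (0 : X) ∈ C := subset_closure h0cone
  -- closure of the cone is closed under addition
  have haddC : ∀ v ∈ C, ∀ w ∈ C, v + w ∈ C := by
    intro v hv w hw
    obtain ⟨vs, hvs, hvlim⟩ := mem_closure_iff_seq_limit.1 hv
    obtain ⟨ws, hws, hwlim⟩ := mem_closure_iff_seq_limit.1 hw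
    exact mem_closure_iff_seq_limit.2
      ⟨fun n => vs n + ws n, fun n => hadd _ (hvs n) _ (hws n), hvlim.add hwlim⟩
  -- key inequality on the closed cone
  have hkey : ∀ w ∈ C, u * ‖w‖ ≤ M * f w := by
    have hsub : genCone (0 : X) B ⊆ {w : X | u * ‖w‖ ≤ M * f w} := by
      intro w hw
      obtain ⟨t, ht, b, hb, rfl⟩ := (hcone_mem w).1 hw
      have h1 : ‖t • b‖ = t * ‖b‖ := by
        rw [norm_smul, Real.norm_eq_abs, abs_of_nonneg ht]
      have h2 : f (t • b) = t * f b := by simp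
      have hbM : ‖b‖ ≤ M := hM _ hb
      have hfb : u < f b := hfB _ hb
      simp only [mem_setOf_eq, h1, h2]
      nlinarith [mul_le_mul_of_nonneg_left hbM (mul_nonneg hu.le ht),
        mul_le_mul_of_nonneg_left hfb.le (mul_nonneg hM0 ht)]
    have hcl : IsClosed {w : X | u * ‖w‖ ≤ M * f w} :=
      isClosed_le (by fun_prop) (by fun_prop)
    exact fun w hw => closure_minimal hsub hcl hw
  -- norm bound on `V`
  have hVnorm : ∀ y ∈ V, ‖y‖ ≤ M := by
    intro y hy
    obtain ⟨t, ht, b, hb, rfl⟩ := hVsub hy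
    have : ‖(0 : X) + t • (b - 0)‖ = t * ‖b‖ := by
      rw [zero_add, sub_zero, norm_smul, Real.norm_eq_abs, abs_of_nonneg ht.1]
    rw [this]
    calc t * ‖b‖ ≤ 1 * M := by
          apply mul_le_mul ht.2 (hM _ hb) (norm_nonneg _) zero_le_one
      _ = M := one_mul M
  -- `f` is bounded above on `V`
  have hfbd : ∀ y ∈ V, f y ≤ ‖f‖ * M := by
    intro y hy
    calc f y ≤ ‖f y‖ := le_abs_self _
      _ ≤ ‖f‖ * ‖y‖ := f.le_opNorm y
      _ ≤ ‖f‖ * M := by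
          exact mul_le_mul_of_nonneg_left (hVnorm y hy) (norm_nonneg f)
  -- one-step improvement
  have hstep : ∀ x ∈ V, ∀ ε : ℝ, 0 < ε → ∃ y, y ∈ V ∧ y - x ∈ C ∧
      ∀ z ∈ V, z - y ∈ C → f z < f y + ε := by
    intro x hx ε hε
    set S : Set X := {y | y ∈ V ∧ y - x ∈ C} with hS
    have hSne : S.Nonempty := ⟨x, hx, by simpa using h0C⟩
    have hSbdd : BddAbove (f '' S) := by
      refine ⟨‖f‖ * M, ?_⟩
      rintro - ⟨z, hz, rfl⟩
      exact hfbd z hz.1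
    have hlt : sSup (f '' S) - ε < sSup (f '' S) := by linarith
    obtain ⟨-, ⟨y, hy, rfl⟩, hy2⟩ := exists_lt_of_lt_csSup (hSne.image f) hlt
    refine ⟨y, hy.1, hy.2, ?_⟩
    intro z hz hzy
    have hzS : z ∈ S := ⟨hz, by
      have := haddC _ hzy _ hy.2
      simpa using this⟩
    have : f z ≤ sSup (f '' S) := le_csSup hSbdd ⟨z, hzS, rfl⟩
    linarith
  choose! g hgV hgC hgMax using hstep
  -- the iterated sequence
  set seq : ℕ → X := fun n => Nat.rec (0 : X) (fun n xn => g xn ((1 / 2) ^ n)) n with hseq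
  have hseqS : ∀ n, seq (n + 1) = g (seq n) ((1 / 2) ^ n) := fun n => rfl
  have hpow : ∀ n : ℕ, (0 : ℝ) < (1 / 2) ^ n := fun n => by positivity
  have hseqV : ∀ n, seq n ∈ V := by
    intro n
    induction n with
    | zero => exact h0V
    | succ n ih => rw [hseqS]; exact hgV _ ih _ (hpow n)
  have hseqC : ∀ n m, n ≤ m → seq m - seq n ∈ C := by
    intro n m hnm
    induction m with
    | zero =>
      have h0 : n = 0 := Nat.le_zero.1 hnm
      subst h0; simpa using h0C
    | succ m ih =>
      rcases Nat.lt_or_ge n (m + 1) with h | h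
      · have h' : n ≤ m := Nat.lt_succ_iff.1 h
        have h1 : seq (m + 1) - seq m ∈ C := hgC _ (hseqV m) _ (hpow m)
        have h2 : seq m - seq n ∈ C := ih h'
        have := haddC _ h1 _ h2
        simpa [sub_add_sub_cancel] using this
      · have heq : n = m + 1 := le_antisymm hnm h
        subst heq; simpa using h0C
  -- the crucial distance estimate
  have hdist : ∀ n, ∀ z ∈ V, z - seq (n + 1) ∈ C → ‖z - seq (n + 1)‖ ≤ M / u * (1 / 2) ^ n := by
    intro n z hz hzc
    have h1 : f z < f (seq (n + 1)) + (1 / 2) ^ n := hgMax _ (hseqV n) _ (hpow n) z hz hzc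
    have h2 : u * ‖z - seq (n + 1)‖ ≤ M * f (z - seq (n + 1)) := hkey _ hzc
    have h3 : f (z - seq (n + 1)) = f z - f (seq (n + 1)) := by simp
    rw [h3] at h2
    rw [div_mul_eq_mul_div, le_div_iff₀ hu]
    nlinarith [hpow n, norm_nonneg (z - seq (n + 1))]
  -- the sequence is Cauchy
  have hcauchy : CauchySeq seq := by
    rw [Metric.cauchySeq_iff']
    intro ε hε
    obtain ⟨n, hn⟩ : ∃ n : ℕ, M / u * (1 / 2) ^ n < ε := by
      have h2 : Filter.Tendsto (fun n : ℕ => M / u * (1 / 2) ^ n) atTop (nhds 0) := by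
        rw [show (0 : ℝ) = M / u * 0 by ring]
        exact (tendsto_pow_atTop_nhds_zero_of_lt_one (by norm_num) (by norm_num)).const_mul _
      exact ((h2.eventually (gt_mem_nhds hε)).exists)
    refine ⟨n + 1, fun m hm => ?_⟩
    have h1 : seq m - seq (n + 1) ∈ C := hseqC _ _ hm
    have h2 := hdist n (seq m) (hseqV m) h1
    calc dist (seq m) (seq (n + 1)) = ‖seq m - seq (n + 1)‖ := by
          rw [dist_eq_norm]
      _ ≤ M / u * (1 / 2) ^ n := h2
      _ < ε := hn
  obtain ⟨x₀, hx₀⟩ := cauchySeq_tendsto_of_complete hcauchy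
  have hx₀V : x₀ ∈ V := hVcl.mem_of_tendsto hx₀ (Filter.Eventually.of_forall hseqV)
  have hx₀C : ∀ n, x₀ - seq n ∈ C := by
    intro n
    have h1 : Filter.Tendsto (fun m => seq m - seq n) atTop (nhds (x₀ - seq n)) :=
      hx₀.sub_const _
    exact hCcl.mem_of_tendsto h1
      (Filter.eventually_atTop.2 ⟨n, fun m hm => hseqC n m hm⟩)
  refine ⟨x₀, hx₀V, ?_⟩
  rintro y ⟨v, hv, rfl⟩ hne hyV
  have hyC : x₀ + v - x₀ ∈ C := by simpa using subset_closure hv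
  have hbound : ∀ n, ‖x₀ + v - seq (n + 1)‖ ≤ M / u * (1 / 2) ^ n := by
    intro n
    have h1 : x₀ + v - seq (n + 1) ∈ C := by
      have h := haddC _ hyC _ (hx₀C (n + 1))
      have e : x₀ + v - seq (n + 1) = x₀ + v - x₀ + (x₀ - seq (n + 1)) := by abel
      rw [e]; exact h
    exact hdist n _ hyV h1
  have hlim : Filter.Tendsto (fun n : ℕ => ‖x₀ + v - seq (n + 1)‖) atTop
      (nhds ‖x₀ + v - x₀‖) := by
    have h1 : Filter.Tendsto (fun n : ℕ => seq (n + 1)) atTop (nhds x₀) :=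
      hx₀.comp (tendsto_add_atTop_nat 1)
    exact ((tendsto_const_nhds.sub h1).norm)
  have hlim0 : Filter.Tendsto (fun n : ℕ => M / u * (1 / 2) ^ n) atTop (nhds 0) := by
    rw [show (0 : ℝ) = M / u * 0 by ring]
    exact (tendsto_pow_atTop_nhds_zero_of_lt_one (by norm_num) (by norm_num)).const_mul _
  have hle : ‖x₀ + v - x₀‖ ≤ 0 :=
    le_of_tendsto_of_tendsto' hlim hlim0 hbound
  have : v = 0 := by
    have := le_antisymm hle (norm_nonneg _)
    simpa using this
  exact hne (by simp [this])
end

section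
/- Let X be a real Banach space, let A ⊆ X be a nonempty convex set, let x̄ ∈ X, let n > 0 be a real constant, and define ψ : X → ℝ by ψ(x) := n · dist(x, x̄ + C(0;A)). If x ∈ X and p is a continuous linear functional on X satisfying the subgradient inequality p(y) − p(x) ≤ ψ(y) − ψ(x) for all y ∈ X, then p(a) ≤ 0 for every a ∈ A; equivalently, inf_{a∈A} p(−a) ≥ 0. -/
open Set

lemma genCone_add_mem {X : Type*} [AddCommGroup X] [Module ℝ X] {A : Set X}
    (hAconv : Convex ℝ A) {c a : X} (hc : c ∈ genCone 0 A) (ha : a ∈ A) :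
    c + a ∈ genCone 0 A := by
  obtain ⟨s, hs, x₁, hx₁, rfl⟩ := hc
  have hs1 : (0:ℝ) < s + 1 := by linarith
  refine ⟨s + 1, by linarith, (s/(s+1)) • x₁ + (1/(s+1)) • a, ?_, ?_⟩
  · exact hAconv hx₁ ha (by positivity) (by positivity) (by field_simp)
  · simp only [zero_add, sub_zero, smul_add, smul_smul]
    rw [mul_div_cancel₀ _ hs1.ne', mul_one_div, div_self hs1.ne', one_smul]

theorem subgradient_of_cone_dist_nonpos
    {X : Type*} [NormedAddCommGroup X] [NormedSpace ℝ X] [CompleteSpace X]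
    (A : Set X) (hA : A.Nonempty) (hAconv : Convex ℝ A) (xbar : X)
    (n : ℝ) (hn : 0 < n)
    (ψ : X → ℝ)
    (hψ : ∀ x, ψ x = n * Metric.infDist x ((fun v => xbar + v) '' genCone 0 A))
    (x : X) (p : X →L[ℝ] ℝ)
    (hp : ∀ y : X, p y - p x ≤ ψ y - ψ x) :
    (∀ a ∈ A, p a ≤ 0) ∧ (∀ a ∈ A, 0 ≤ p (-a)) := by
  have key : ∀ a ∈ A, p a ≤ 0 := by
    intro a ha
    set S := (fun v => xbar + v) '' genCone 0 A with hS
    have hSne : S.Nonempty := by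
      obtain ⟨x₀, hx₀⟩ := hA
      exact ⟨xbar + (0:ℝ) • (x₀ - 0), ⟨_, ⟨0, le_refl _, x₀, hx₀, by simp⟩, rfl⟩⟩
    -- the translate of S by a is contained in S
    have hsub : (fun v => v + a) '' S ⊆ S := by
      rintro _ ⟨_, ⟨c, hc, rfl⟩, rfl⟩
      exact ⟨c + a, genCone_add_mem hAconv hc ha, by simp [add_assoc]⟩
    have hiso : Isometry (fun v : X => v + a) := isometry_add_right a
    have hdist : Metric.infDist (x + a) S ≤ Metric.infDist x S := by
      calc Metric.infDist (x + a) S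
          ≤ Metric.infDist (x + a) ((fun v => v + a) '' S) :=
            Metric.infDist_le_infDist_of_subset hsub (hSne.image _)
        _ = Metric.infDist x S := Metric.infDist_image (t := S) hiso
    have := hp (x + a)
    rw [hψ (x + a), hψ x] at this
    have hψle : n * Metric.infDist (x + a) S - n * Metric.infDist x S ≤ 0 := by
      nlinarith
    have : p (x + a) - p x ≤ 0 := le_trans this hψle
    simpa using this
  exact ⟨key, fun a ha => by simpa using neg_nonneg.mpr (key a ha)⟩
end

section
/- Let X be a real Banach space, let A ⊆ X be a nonempty, closed, convex and bounded set, let a ∈ X \ A, and let x̄ be a point of the multidirectional interval [a,A] with x̄ ∉ A. Then there exists δ > 0 such that B(x̄; δ) ∩ (x̄ + C(0; A − a)) ⊆ [a,A], where B(x̄; δ) is the closed ball of radius δ around x̄. -/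
open Set

/-! The point `x̄ = a + t₀ (x₀ - a)` lies strictly before `A` on its ray, so `t₀ < 1`, and every
`x ∈ A` is at distance at least `d = infDist a A > 0` from `a`. A cone point `x̄ + s (x - a)` within
`(1 - t₀) d` of `x̄` therefore has `s ≤ 1 - t₀`, and by convexity
`x̄ + s (x - a) = a + (t₀ + s) (y - a)` with `y = (t₀ x₀ + s x) / (t₀ + s) ∈ A` and `t₀ + s ≤ 1`. -/

theorem add_smul_sub_add_smul_sub_mem_mdInterval {X : Type*} [AddCommGroup X] [Module ℝ X]
    {A : Set X} (hA : Convex ℝ A) (a : X) {x y : X} (hx : x ∈ A) (hy : y ∈ A) {t s : ℝ}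
    (ht : 0 ≤ t) (hs : 0 ≤ s) (hts : t + s ≤ 1) :
    a + t • (x - a) + s • (y - a) ∈ mdInterval a A := by
  rcases (add_nonneg ht hs).eq_or_lt with hts0 | hts0
  · obtain ⟨rfl, rfl⟩ : t = 0 ∧ s = 0 := ⟨by linarith, by linarith⟩
    exact ⟨0, ⟨le_rfl, zero_le_one⟩, x, hx, by simp⟩
  · refine ⟨t + s, ⟨hts0.le, hts⟩, (t / (t + s)) • x + (s / (t + s)) • y,
      hA hx hy (by positivity) (by positivity) (by field_simp), ?_⟩
    match_scalars <;> field_simp; ring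

theorem le_of_norm_smul_sub_le_mul_infDist {X : Type*} [NormedAddCommGroup X] [NormedSpace ℝ X]
    {A : Set X} {a x : X} (hd : 0 < Metric.infDist a A) (hx : x ∈ A) {s c : ℝ} (hs : 0 ≤ s)
    (h : ‖s • (x - a)‖ ≤ c * Metric.infDist a A) : s ≤ c := by
  have hxa : Metric.infDist a A ≤ ‖x - a‖ := by
    simpa only [dist_eq_norm'] using Metric.infDist_le_dist_of_mem hx
  refine le_of_mul_le_mul_right ?_ hd
  calc s * Metric.infDist a A ≤ s * ‖x - a‖ := by gcongr
    _ = ‖s • (x - a)‖ := by rw [norm_smul_of_nonneg hs]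
    _ ≤ c * Metric.infDist a A := h

theorem ball_inter_cone_subset_mdInterval_general
    {X : Type*} [NormedAddCommGroup X] [NormedSpace ℝ X]
    (A : Set X) (hA : A.Nonempty) (hAcl : IsClosed A) (hAconv : Convex ℝ A)
    (a : X) (haA : a ∉ A)
    (xbar : X) (hxbar : xbar ∈ mdInterval a A) (hxbarA : xbar ∉ A) :
    ∃ δ > (0 : ℝ),
      Metric.closedBall xbar δ ∩
        ((fun v => xbar + v) '' genCone 0 ((fun x => x - a) '' A)) ⊆
      mdInterval a A := by
  obtain ⟨t₀, ⟨ht₀, ht₀_le⟩, x₀, hx₀, rfl⟩ := hxbar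
  have ht₀_lt : t₀ < 1 := ht₀_le.lt_of_ne <| by
    rintro rfl
    exact hxbarA (by simpa using hx₀)
  have hd : 0 < Metric.infDist a A := (hAcl.notMem_iff_infDist_pos hA).mp haA
  refine ⟨(1 - t₀) * Metric.infDist a A, mul_pos (by linarith) hd, ?_⟩
  rintro _ ⟨hp, _, ⟨s, hs, _, ⟨x, hx, rfl⟩, rfl⟩, rfl⟩
  simp only [Metric.mem_closedBall, dist_self_add_left, zero_add, sub_zero] at hp
  have hs_le : s ≤ 1 - t₀ := le_of_norm_smul_sub_le_mul_infDist hd hx hs hp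
  simpa only [zero_add, sub_zero] using
    add_smul_sub_add_smul_sub_mem_mdInterval hAconv a hx₀ hx ht₀ hs (by linarith)

theorem ball_inter_cone_subset_mdInterval
    {X : Type*} [NormedAddCommGroup X] [NormedSpace ℝ X] [CompleteSpace X]
    (A : Set X) (hA : A.Nonempty) (hAcl : IsClosed A) (hAconv : Convex ℝ A)
    (hAbd : Bornology.IsBounded A)
    (a : X) (haA : a ∉ A)
    (xbar : X) (hxbar : xbar ∈ mdInterval a A) (hxbarA : xbar ∉ A) :
    ∃ δ > (0 : ℝ),
      Metric.closedBall xbar δ ∩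
        ((fun v => xbar + v) '' genCone 0 ((fun x => x - a) '' A)) ⊆
      mdInterval a A :=
  ball_inter_cone_subset_mdInterval_general A hA hAcl hAconv a haA xbar hxbar hxbarA
end
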